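/- For every ζ ∈ (1/√3, 1) the saddle point k₂(ζ) = (1/4)(ζ − √(8+ζ²) − i√2·√(4−ζ²+ζ√(8+ζ²))) satisfies Re k₂ < 0, Im k₂ < 0, |Im k₂| < |Re k₂|·√3, and |Im k₂| > |Re k₂|; that is, arg k₂ ∈ (−3π/4, −2π/3). -/
import Mathlib


open Complex

noncomputable def k₂ (ζ : ℝ) : ℂ :=
  (1 / 4 : ℂ) * ((ζ : ℂ) - (Real.sqrt (8 + ζ ^ 2) : ℂ) -
    Complex.I * (Real.sqrt 2 : ℂ) *
      (Real.sqrt (4 - ζ ^ 2 + ζ * Real.sqrt (8 + ζ ^ 2)) : ℂ))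

theorem k2_argument_range (ζ : ℝ) (hζ : ζ ∈ Set.Ioo (1 / Real.sqrt 3) 1) :
    (k₂ ζ).re < 0 ∧ (k₂ ζ).im < 0 ∧
    |(k₂ ζ).im| < |(k₂ ζ).re| * Real.sqrt 3 ∧ |(k₂ ζ).re| < |(k₂ ζ).im| := by
  obtain ⟨hζl, hζ1⟩ := hζ
  have h3 : (0:ℝ) < Real.sqrt 3 := Real.sqrt_pos.mpr (by norm_num)
  have hζ0 : 0 < ζ := lt_trans (by positivity) hζl
  set s := Real.sqrt (8 + ζ ^ 2) with hs
  have hs0 : 0 < s := Real.sqrt_pos.mpr (by nlinarith)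
  have hs2 : s ^ 2 = 8 + ζ ^ 2 := Real.sq_sqrt (by nlinarith)
  have hζs : ζ < s := by nlinarith
  set u := Real.sqrt (4 - ζ ^ 2 + ζ * s) with hu
  have hu0 : 0 < u := Real.sqrt_pos.mpr (by nlinarith)
  have hu2 : u ^ 2 = 4 - ζ ^ 2 + ζ * s := Real.sq_sqrt (by nlinarith)
  have h2 : (0:ℝ) < Real.sqrt 2 := Real.sqrt_pos.mpr (by norm_num)
  have h2sq : Real.sqrt 2 ^ 2 = 2 := Real.sq_sqrt (by norm_num)
  have h3sq : Real.sqrt 3 ^ 2 = 3 := Real.sq_sqrt (by norm_num)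
  have hre : (k₂ ζ).re = (ζ - s) / 4 := by
    simp [k₂, Complex.mul_re, Complex.mul_im]; ring
  have him : (k₂ ζ).im = -(Real.sqrt 2 * u) / 4 := by
    simp [k₂, Complex.mul_re, Complex.mul_im]; ring
  have hreneg : (k₂ ζ).re < 0 := by rw [hre]; linarith
  have himneg : (k₂ ζ).im < 0 := by
    rw [him]; have := mul_pos h2 hu0; linarith
  refine ⟨hreneg, himneg, ?_, ?_⟩
  · rw [abs_of_neg hreneg, abs_of_neg himneg, hre, him]
    have key : ζ * s < 2 + ζ ^ 2 := by
      nlinarith [mul_pos hζ0 hs0, sq_nonneg (ζ * s - 2 - ζ ^ 2)]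
    have hsq : (Real.sqrt 2 * u) ^ 2 < (Real.sqrt 3 * (s - ζ)) ^ 2 := by
      have : (Real.sqrt 3 * (s - ζ)) ^ 2 = 3 * (s - ζ) ^ 2 := by
        rw [mul_pow, h3sq]
      nlinarith
    have hlt : Real.sqrt 2 * u < Real.sqrt 3 * (s - ζ) := by
      have hb : 0 ≤ Real.sqrt 3 * (s - ζ) := mul_nonneg h3.le (by linarith)
      exact lt_of_pow_lt_pow_left₀ 2 hb hsq
    nlinarith
  · rw [abs_of_neg hreneg, abs_of_neg himneg, hre, him]
    have hsq : (s - ζ) ^ 2 < (Real.sqrt 2 * u) ^ 2 := by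
      have : (Real.sqrt 2 * u) ^ 2 = 2 * u ^ 2 := by rw [mul_pow, h2sq]
      nlinarith [mul_pos hζ0 hs0]
    have hlt : s - ζ < Real.sqrt 2 * u := by
      have hb : 0 ≤ Real.sqrt 2 * u := by positivity
      exact lt_of_pow_lt_pow_left₀ 2 hb hsq
    linarith
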